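/- For probability measures μ, ν on ℝ with quantile functions F_μ⁻¹, F_ν⁻¹ ∈ L²(0,1), the coupling π = (F_μ⁻¹, F_ν⁻¹)_# 𝕌 (pushforward of the uniform distribution under the pair of quantile functions) is an optimal coupling for the quadratic cost, i.e., ∫|y−y′|² dπ = W₂²(μ,ν). -/

import Mathlib

open MeasureTheory Set

open ProbabilityTheory Filter Topology

set_option linter.unusedSectionVars false
set_option linter.unusedVariables false
set_option linter.unreachableTactic false
set_option linter.unusedTactic false

/-- The uniform probability measure on `(0,1)`. -/
noncomputable def unif : Measure ℝ := volume.restrict (Set.Ioo (0 : ℝ) 1)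

/-- The cumulative distribution function of a measure on `ℝ`. -/
noncomputable def mcdf (μ : Measure ℝ) (y : ℝ) : ℝ := (μ (Set.Iic y)).toReal

/-- The quantile function (generalized inverse CDF) of a measure on `ℝ`. -/
noncomputable def quantile (μ : Measure ℝ) (t : ℝ) : ℝ := sInf {y | t ≤ mcdf μ y}

section Aux

lemma unif_apply (s : Set ℝ) : unif s = volume (s ∩ Set.Ioo 0 1) :=
  Measure.restrict_apply' measurableSet_Ioo

instance : IsProbabilityMeasure unif := by
  constructor
  rw [unif_apply, Set.univ_inter, Real.volume_Ioo]
  norm_num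

variable {μ : Measure ℝ} [IsProbabilityMeasure μ]

lemma mcdf_eq (y : ℝ) : mcdf μ y = cdf μ y := (cdf_eq_real μ y).symm

lemma mcdf_nonneg (y : ℝ) : 0 ≤ mcdf μ y := ENNReal.toReal_nonneg

lemma mcdf_le_one (y : ℝ) : mcdf μ y ≤ 1 := by rw [mcdf_eq]; exact cdf_le_one μ y

lemma mcdf_mono : Monotone (mcdf (μ := μ)) := by
  intro a b hab
  rw [mcdf_eq, mcdf_eq]
  exact monotone_cdf μ hab

lemma quantile_le_iff {t y : ℝ} (ht : t ∈ Set.Ioo (0:ℝ) 1) :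
    quantile μ t ≤ y ↔ t ≤ mcdf μ y := by
  set S : Set ℝ := {y | t ≤ mcdf μ y} with hS
  have hne : S.Nonempty := by
    have h := (tendsto_cdf_atTop μ).eventually (eventually_gt_nhds ht.2)
    obtain ⟨z, hz⟩ := h.exists
    exact ⟨z, by rw [hS, mem_setOf_eq, mcdf_eq]; exact hz.le⟩
  have hbdd : BddBelow S := by
    have h := (tendsto_cdf_atBot μ).eventually (eventually_lt_nhds ht.1)
    obtain ⟨z, hz⟩ := h.exists
    refine ⟨z, fun y hy => ?_⟩
    by_contra hzy
    push_neg at hzy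
    have h2 : mcdf μ y ≤ mcdf μ z := mcdf_mono hzy.le
    rw [hS, mem_setOf_eq] at hy
    simp only [mcdf_eq] at h2 hy
    exact absurd (hy.trans h2) (not_le.2 hz)
  have hmem : sInf S ∈ S := by
    rw [hS, mem_setOf_eq, mcdf_eq]
    have htend : Tendsto (cdf μ) (𝓝[>] (sInf S)) (𝓝 (cdf μ (sInf S))) :=
      ((cdf μ).right_continuous (sInf S)).mono_left (nhdsWithin_mono _ Ioi_subset_Ici_self)
    refine ge_of_tendsto htend ?_
    filter_upwards [self_mem_nhdsWithin] with y hy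
    obtain ⟨z, hzS, hzy⟩ := (csInf_lt_iff hbdd hne).1 hy
    have := mcdf_mono (μ := μ) hzy.le
    simp only [mcdf_eq] at this
    rw [hS, mem_setOf_eq, mcdf_eq] at hzS
    exact hzS.trans this
  constructor
  · intro h
    exact le_trans hmem (mcdf_mono h)
  · intro h
    exact csInf_le hbdd h

lemma quantile_monotoneOn : MonotoneOn (quantile μ) (Set.Ioo 0 1) := by
  intro a ha b hb hab
  exact (quantile_le_iff ha).2 (hab.trans ((quantile_le_iff hb).1 le_rfl))

lemma quantile_aemeasurable : AEMeasurable (quantile μ) unif :=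
  aemeasurable_restrict_of_monotoneOn measurableSet_Ioo quantile_monotoneOn

lemma vol_Ioo_inter_Iic {c : ℝ} (h0 : 0 ≤ c) (h1 : c ≤ 1) :
    volume (Set.Ioo (0:ℝ) 1 ∩ Set.Iic c) = ENNReal.ofReal c := by
  rcases eq_or_lt_of_le h1 with h | h
  · have : Set.Ioo (0:ℝ) 1 ∩ Set.Iic c = Set.Ioo 0 1 := by
      rw [inter_eq_left]
      intro x hx
      exact le_of_lt (h ▸ hx.2)
    rw [this, Real.volume_Ioo, h]
    norm_num
  · have : Set.Ioo (0:ℝ) 1 ∩ Set.Iic c = Set.Ioc 0 c := by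
      ext x
      simp only [mem_inter_iff, mem_Ioo, mem_Iic, mem_Ioc]
      constructor
      · rintro ⟨⟨h1, h2⟩, h3⟩; exact ⟨h1, h3⟩
      · rintro ⟨h1, h2⟩; exact ⟨⟨h1, lt_of_le_of_lt h2 h⟩, h2⟩
    rw [this, Real.volume_Ioc, sub_zero]

lemma map_quantile : unif.map (quantile μ) = μ := by
  refine Measure.ext_of_Iic _ _ (fun y => ?_)
  rw [Measure.map_apply_of_aemeasurable quantile_aemeasurable measurableSet_Iic, unif_apply]
  have hset : quantile μ ⁻¹' Set.Iic y ∩ Set.Ioo 0 1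
      = Set.Ioo (0:ℝ) 1 ∩ Set.Iic (mcdf μ y) := by
    ext t
    simp only [mem_inter_iff, mem_preimage, mem_Iic]
    constructor
    · rintro ⟨h1, h2⟩; exact ⟨h2, (quantile_le_iff h2).1 h1⟩
    · rintro ⟨h1, h2⟩; exact ⟨(quantile_le_iff h1).2 h2, h1⟩
  rw [hset, vol_Ioo_inter_Iic (mcdf_nonneg y) (mcdf_le_one y),
    mcdf, ENNReal.ofReal_toReal (measure_ne_top μ _)]


noncomputable def psi (x s : ℝ) : ℝ := (if s < x then 1 else 0) - (if s < 0 then 1 else 0)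

lemma psi_measurable : Measurable (fun p : ℝ × ℝ => psi p.1 p.2) := by
  unfold psi
  exact ((measurable_const.ite (measurableSet_lt measurable_snd measurable_fst)
    measurable_const)).sub ((measurable_const.ite
      (measurableSet_lt measurable_snd measurable_const) measurable_const))

lemma psi_eq_of_nonneg {x : ℝ} (hx : 0 ≤ x) :
    psi x = (Set.Ico (0:ℝ) x).indicator (fun _ => (1:ℝ)) := by
  funext s
  rcases lt_or_ge s x with h1 | h1 <;> rcases lt_or_ge s 0 with h2 | h2
  · simp [psi, if_pos h1, if_pos h2, indicator_apply, mem_Ico, not_le.2 h2]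
  · simp [psi, if_pos h1, if_neg (not_lt.2 h2), indicator_apply, mem_Ico, h1, h2]
  · exact absurd (h2.trans_le hx) (not_lt.2 h1)
  · simp [psi, if_neg (not_lt.2 h1), if_neg (not_lt.2 h2), indicator_apply, mem_Ico,
      not_lt.2 h1]
lemma psi_eq_of_neg {x : ℝ} (hx : x < 0) :
    psi x = fun s => -((Set.Ico x (0:ℝ)).indicator (fun _ => (1:ℝ)) s) := by
  funext s
  rcases lt_or_ge s x with h1 | h1 <;> rcases lt_or_ge s 0 with h2 | h2
  · simp [psi, if_pos h1, if_pos h2, indicator_apply, mem_Ico, not_le.2 h1]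
  · exact absurd (h1.trans hx) (not_lt.2 h2)
  · simp [psi, if_neg (not_lt.2 h1), if_pos h2, indicator_apply, mem_Ico, h1, h2]
  · simp [psi, if_neg (not_lt.2 h1), if_neg (not_lt.2 h2), indicator_apply, mem_Ico,
      not_lt.2 h2]

lemma psi_nonneg_of_nonneg {x : ℝ} (hx : 0 ≤ x) (s : ℝ) : 0 ≤ psi x s := by
  rw [psi_eq_of_nonneg hx]
  exact indicator_nonneg (fun _ _ => zero_le_one) s

lemma psi_nonpos_of_neg {x : ℝ} (hx : x < 0) (s : ℝ) : psi x s ≤ 0 := by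
  rw [psi_eq_of_neg hx]
  exact neg_nonpos.2 (indicator_nonneg (fun _ _ => zero_le_one) s)

lemma indicator_Ico_integrable {a b : ℝ} :
    Integrable ((Set.Ico a b).indicator (fun _ => (1:ℝ))) volume := by
  rw [integrable_indicator_iff measurableSet_Ico]
  exact integrableOn_const (by rw [Real.volume_Ico]; exact ENNReal.ofReal_ne_top)

lemma integrable_psi (x : ℝ) : Integrable (psi x) volume := by
  rcases le_or_gt 0 x with hx | hx
  · rw [psi_eq_of_nonneg hx]; exact indicator_Ico_integrable
  · rw [psi_eq_of_neg hx]; exact indicator_Ico_integrable.neg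

lemma integral_indicator_Ico {a b : ℝ} (hab : a ≤ b) :
    ∫ s, (Set.Ico a b).indicator (fun _ => (1:ℝ)) s = b - a := by
  rw [integral_indicator_const (1:ℝ) measurableSet_Ico, measureReal_def, Real.volume_Ico, smul_eq_mul, mul_one,
    ENNReal.toReal_ofReal (by linarith)]

lemma integral_psi (x : ℝ) : ∫ s, psi x s = x := by
  rcases le_or_gt 0 x with hx | hx
  · rw [psi_eq_of_nonneg hx, integral_indicator_Ico hx, sub_zero]
  · rw [psi_eq_of_neg hx, integral_neg, integral_indicator_Ico hx.le, zero_sub, neg_neg]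

lemma integral_abs_psi (x : ℝ) : ∫ s, |psi x s| = |x| := by
  rcases le_or_gt 0 x with hx | hx
  · have h : (fun s => |psi x s|) = psi x :=
      funext fun s => abs_of_nonneg (psi_nonneg_of_nonneg hx s)
    rw [h, integral_psi, abs_of_nonneg hx]
  · have h : (fun s => |psi x s|) = fun s => -(psi x s) :=
      funext fun s => abs_of_nonpos (psi_nonpos_of_neg hx s)
    rw [h, integral_neg, integral_psi, abs_of_neg hx]


/-- `π` is a coupling of `μ` and `ν`. -/
def IsCoupling (π : Measure (ℝ × ℝ)) (μ ν : Measure ℝ) : Prop :=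
  π.map Prod.fst = μ ∧ π.map Prod.snd = ν

section Coupling

variable {ν : Measure ℝ} [IsProbabilityMeasure ν] {π : Measure (ℝ × ℝ)}

lemma IsCoupling.isProbabilityMeasure (hc : IsCoupling π μ ν) : IsProbabilityMeasure π := by
  refine ⟨?_⟩
  have h := Measure.map_apply (μ := π) measurable_fst MeasurableSet.univ
  rw [hc.1, measure_univ, Set.preimage_univ] at h
  exact h.symm

lemma IsCoupling.marg_fst (hc : IsCoupling π μ ν) {s : Set ℝ} (hs : MeasurableSet s) :
    π (s ×ˢ (Set.univ : Set ℝ)) = μ s := by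
  have h := Measure.map_apply (μ := π) measurable_fst hs
  rw [hc.1] at h
  rw [h]
  congr 1
  ext p
  simp [Set.mem_prod]

lemma IsCoupling.marg_snd (hc : IsCoupling π μ ν) {s : Set ℝ} (hs : MeasurableSet s) :
    π ((Set.univ : Set ℝ) ×ˢ s) = ν s := by
  have h := Measure.map_apply (μ := π) measurable_snd hs
  rw [hc.2] at h
  rw [h]
  congr 1
  ext p
  simp [Set.mem_prod]

lemma IsCoupling.H_le_min (hc : IsCoupling π μ ν) (s t : ℝ) :
    π (Set.Iic s ×ˢ Set.Iic t) ≤ min (μ (Set.Iic s)) (ν (Set.Iic t)) := by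
  refine le_min ?_ ?_
  · rw [← hc.marg_fst measurableSet_Iic]
    exact measure_mono (Set.prod_mono_right (subset_univ _))
  · rw [← hc.marg_snd measurableSet_Iic]
    exact measure_mono (Set.prod_mono_left (subset_univ _))

lemma IsCoupling.toReal_Ioi_prod_Ioi (hc : IsCoupling π μ ν) (s t : ℝ) :
    (π (Set.Ioi s ×ˢ Set.Ioi t)).toReal
      = 1 - mcdf μ s - mcdf ν t + (π (Set.Iic s ×ˢ Set.Iic t)).toReal := by
  haveI := hc.isProbabilityMeasure
  set A := Set.Iic s ×ˢ (Set.univ : Set ℝ) with hA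
  set B := (Set.univ : Set ℝ) ×ˢ Set.Iic t with hB
  have hAB : A ∪ B = (Set.Ioi s ×ˢ Set.Ioi t)ᶜ := by
    ext p
    simp only [hA, hB, Set.mem_union, Set.mem_prod, Set.mem_Iic, Set.mem_univ, and_true,
      true_and, Set.mem_compl_iff, Set.mem_Ioi, not_and_or, not_lt]
  have h1 : π (Set.Ioi s ×ˢ Set.Ioi t) + π (A ∪ B) = 1 := by
    rw [hAB]
    rw [measure_add_measure_compl (measurableSet_Ioi.prod measurableSet_Ioi)]
    exact measure_univ
  have h2 : π (A ∪ B) + π (A ∩ B) = π A + π B :=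
    measure_union_add_inter _ (MeasurableSet.univ.prod measurableSet_Iic)
  have hInter : A ∩ B = Set.Iic s ×ˢ Set.Iic t := by
    rw [hA, hB, Set.prod_inter_prod, Set.inter_univ, Set.univ_inter]
  have hA' : π A = μ (Set.Iic s) := hc.marg_fst measurableSet_Iic
  have hB' : π B = ν (Set.Iic t) := hc.marg_snd measurableSet_Iic
  rw [hInter, hA', hB'] at h2
  have e1 := congrArg ENNReal.toReal h1
  have e2 := congrArg ENNReal.toReal h2
  rw [ENNReal.toReal_add (measure_ne_top _ _) (measure_ne_top _ _), ENNReal.toReal_one] at e1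
  rw [ENNReal.toReal_add (measure_ne_top _ _) (measure_ne_top _ _),
    ENNReal.toReal_add (measure_ne_top _ _) (measure_ne_top _ _)] at e2
  unfold mcdf
  linarith

lemma IsCoupling.integral_psi_mul (hc : IsCoupling π μ ν) (s t : ℝ) :
    ∫ p : ℝ × ℝ, psi p.1 s * psi p.2 t ∂π
      = (π (Set.Ioi s ×ˢ Set.Ioi t)).toReal
        - (if t < 0 then (1:ℝ) else 0) * (μ (Set.Ioi s)).toReal
        - (if s < 0 then (1:ℝ) else 0) * (ν (Set.Ioi t)).toReal
        + (if s < 0 then (1:ℝ) else 0) * (if t < 0 then (1:ℝ) else 0) := by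
  haveI := hc.isProbabilityMeasure
  set cs : ℝ := if s < 0 then (1:ℝ) else 0 with hcs
  set ct : ℝ := if t < 0 then (1:ℝ) else 0 with hct
  have hfg : ∀ p : ℝ × ℝ, psi p.1 s * psi p.2 t =
      (Set.Ioi s ×ˢ Set.Ioi t).indicator (fun _ => (1:ℝ)) p
      - ct * ((Set.Ioi s ×ˢ (Set.univ : Set ℝ)).indicator (fun _ => (1:ℝ)) p)
      - cs * (((Set.univ : Set ℝ) ×ˢ Set.Ioi t).indicator (fun _ => (1:ℝ)) p)
      + cs * ct := by
    intro p
    simp only [psi, indicator_apply, Set.mem_prod, Set.mem_Ioi, Set.mem_univ, and_true,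
      true_and, hcs, hct]
    split_ifs <;> simp_all <;> ring
  have hi1 : Integrable ((Set.Ioi s ×ˢ Set.Ioi t).indicator (fun _ => (1:ℝ))) π :=
    (integrable_const (1:ℝ)).indicator (measurableSet_Ioi.prod measurableSet_Ioi)
  have hi2 : Integrable ((Set.Ioi s ×ˢ (Set.univ : Set ℝ)).indicator (fun _ => (1:ℝ))) π :=
    (integrable_const (1:ℝ)).indicator (measurableSet_Ioi.prod MeasurableSet.univ)
  have hi3 : Integrable (((Set.univ : Set ℝ) ×ˢ Set.Ioi t).indicator (fun _ => (1:ℝ))) π :=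
    (integrable_const (1:ℝ)).indicator (MeasurableSet.univ.prod measurableSet_Ioi)
  calc ∫ p : ℝ × ℝ, psi p.1 s * psi p.2 t ∂π
      = ∫ p : ℝ × ℝ, ((Set.Ioi s ×ˢ Set.Ioi t).indicator (fun _ => (1:ℝ)) p
          - ct * ((Set.Ioi s ×ˢ (Set.univ : Set ℝ)).indicator (fun _ => (1:ℝ)) p)
          - cs * (((Set.univ : Set ℝ) ×ˢ Set.Ioi t).indicator (fun _ => (1:ℝ)) p)
          + cs * ct) ∂π := integral_congr_ae (ae_of_all _ hfg)
    _ = (π (Set.Ioi s ×ˢ Set.Ioi t)).toReal - ct * (π (Set.Ioi s ×ˢ (Set.univ : Set ℝ))).toReal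
          - cs * (π ((Set.univ : Set ℝ) ×ˢ Set.Ioi t)).toReal + cs * ct := by
        have hi2' : Integrable (fun p : ℝ × ℝ =>
            ct * ((Set.Ioi s ×ˢ (Set.univ : Set ℝ)).indicator (fun _ => (1:ℝ)) p)) π :=
          hi2.const_mul ct
        have hi3' : Integrable (fun p : ℝ × ℝ =>
            cs * (((Set.univ : Set ℝ) ×ˢ Set.Ioi t).indicator (fun _ => (1:ℝ)) p)) π :=
          hi3.const_mul cs
        have hf1 : Integrable (fun p : ℝ × ℝ =>
            (Set.Ioi s ×ˢ Set.Ioi t).indicator (fun _ => (1:ℝ)) p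
            - ct * ((Set.Ioi s ×ˢ (Set.univ : Set ℝ)).indicator (fun _ => (1:ℝ)) p)) π :=
          hi1.sub hi2'
        have hf2 : Integrable (fun p : ℝ × ℝ =>
            (Set.Ioi s ×ˢ Set.Ioi t).indicator (fun _ => (1:ℝ)) p
            - ct * ((Set.Ioi s ×ˢ (Set.univ : Set ℝ)).indicator (fun _ => (1:ℝ)) p)
            - cs * (((Set.univ : Set ℝ) ×ˢ Set.Ioi t).indicator (fun _ => (1:ℝ)) p)) π :=
          hf1.sub hi3'
        rw [integral_add hf2 (integrable_const _),
          integral_sub hf1 hi3',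
          integral_sub hi1 hi2', integral_const_mul, integral_const_mul,
          integral_indicator_const (1:ℝ) (measurableSet_Ioi.prod measurableSet_Ioi),
          integral_indicator_const (1:ℝ) (measurableSet_Ioi.prod MeasurableSet.univ),
          integral_indicator_const (1:ℝ) (MeasurableSet.univ.prod measurableSet_Ioi),
          integral_const, probReal_univ]
        simp [smul_eq_mul, measureReal_def]
    _ = _ := by rw [hc.marg_fst measurableSet_Ioi, hc.marg_snd measurableSet_Ioi]

end Coupling


section Mono

variable (ν : Measure ℝ) [IsProbabilityMeasure ν] (μ)

noncomputable def monoCoupling : Measure (ℝ × ℝ) :=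
  unif.map fun t => (quantile μ t, quantile ν t)

lemma pair_aemeasurable : AEMeasurable (fun t => (quantile μ t, quantile ν t)) unif :=
  quantile_aemeasurable.prodMk quantile_aemeasurable

lemma monoCoupling_isCoupling : IsCoupling (monoCoupling μ ν) μ ν := by
  constructor
  · rw [monoCoupling, AEMeasurable.map_map_of_aemeasurable measurable_fst.aemeasurable
      (pair_aemeasurable μ ν)]
    exact map_quantile
  · rw [monoCoupling, AEMeasurable.map_map_of_aemeasurable measurable_snd.aemeasurable
      (pair_aemeasurable μ ν)]
    exact map_quantile

lemma monoCoupling_H (s t : ℝ) :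
    monoCoupling μ ν (Set.Iic s ×ˢ Set.Iic t) = min (μ (Set.Iic s)) (ν (Set.Iic t)) := by
  rw [monoCoupling, Measure.map_apply_of_aemeasurable (pair_aemeasurable μ ν)
    (measurableSet_Iic.prod measurableSet_Iic), unif_apply]
  have hset : ((fun u => (quantile μ u, quantile ν u)) ⁻¹' (Set.Iic s ×ˢ Set.Iic t))
      ∩ Set.Ioo 0 1 = Set.Ioo (0:ℝ) 1 ∩ Set.Iic (min (mcdf μ s) (mcdf ν t)) := by
    ext u
    constructor
    · rintro ⟨hpre, hu⟩
      rw [Set.mem_preimage, Set.mem_prod, Set.mem_Iic, Set.mem_Iic] at hpre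
      exact ⟨hu, le_min ((quantile_le_iff hu).1 hpre.1) ((quantile_le_iff hu).1 hpre.2)⟩
    · rintro ⟨hu, hle⟩
      rw [Set.mem_Iic, le_min_iff] at hle
      refine ⟨?_, hu⟩
      rw [Set.mem_preimage, Set.mem_prod, Set.mem_Iic, Set.mem_Iic]
      exact ⟨(quantile_le_iff hu).2 hle.1, (quantile_le_iff hu).2 hle.2⟩
  have hmin0 : 0 ≤ min (mcdf μ s) (mcdf ν t) := le_min (mcdf_nonneg s) (mcdf_nonneg t)
  have hmin1 : min (mcdf μ s) (mcdf ν t) ≤ 1 := (min_le_left _ _).trans (mcdf_le_one s)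
  rw [hset, vol_Ioo_inter_Iic hmin0 hmin1]
  have hmono : Monotone ENNReal.ofReal := fun a b h => ENNReal.ofReal_le_ofReal h
  rw [hmono.map_min]
  unfold mcdf
  rw [ENNReal.ofReal_toReal (measure_ne_top _ _), ENNReal.ofReal_toReal (measure_ne_top _ _)]

variable {μ ν} {π : Measure (ℝ × ℝ)}

lemma coupling_J_le (hc : IsCoupling π μ ν) (s t : ℝ) :
    ∫ p : ℝ × ℝ, psi p.1 s * psi p.2 t ∂π
      ≤ ∫ p : ℝ × ℝ, psi p.1 s * psi p.2 t ∂(monoCoupling μ ν) := by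
  haveI := (monoCoupling_isCoupling μ ν).isProbabilityMeasure
  rw [hc.integral_psi_mul, (monoCoupling_isCoupling μ ν).integral_psi_mul]
  have h1 := hc.toReal_Ioi_prod_Ioi s t
  have h2 := (monoCoupling_isCoupling μ ν).toReal_Ioi_prod_Ioi s t
  have h3 : (π (Set.Iic s ×ˢ Set.Iic t)).toReal
      ≤ ((monoCoupling μ ν) (Set.Iic s ×ˢ Set.Iic t)).toReal :=
    ENNReal.toReal_mono (measure_ne_top _ _)
      ((hc.H_le_min s t).trans_eq (monoCoupling_H μ ν s t).symm)
  linarith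

end Mono

section Integrability

variable {ν : Measure ℝ} [IsProbabilityMeasure ν] {π : Measure (ℝ × ℝ)}

lemma integrable_sq_of_quantile (hμ2 : Integrable (fun t => (quantile μ t) ^ 2) unif) :
    Integrable (fun x : ℝ => x ^ 2) μ := by
  have h := (integrable_map_measure (f := quantile μ) (g := fun x : ℝ => x ^ 2)
    ((measurable_id.pow_const 2).aestronglyMeasurable) quantile_aemeasurable).2 hμ2
  rwa [map_quantile] at h

lemma IsCoupling.integrable_fst_sq (hc : IsCoupling π μ ν)
    (h2 : Integrable (fun x : ℝ => x ^ 2) μ) :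
    Integrable (fun p : ℝ × ℝ => p.1 ^ 2) π :=
  (integrable_map_measure (g := fun x : ℝ => x ^ 2)
    ((measurable_id.pow_const 2).aestronglyMeasurable) measurable_fst.aemeasurable).1
    (by rwa [hc.1])

lemma IsCoupling.integrable_snd_sq (hc : IsCoupling π μ ν)
    (h2 : Integrable (fun x : ℝ => x ^ 2) ν) :
    Integrable (fun p : ℝ × ℝ => p.2 ^ 2) π :=
  (integrable_map_measure (g := fun x : ℝ => x ^ 2)
    ((measurable_id.pow_const 2).aestronglyMeasurable) measurable_snd.aemeasurable).1
    (by rwa [hc.2])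

lemma IsCoupling.integrable_mul (hc : IsCoupling π μ ν)
    (h1 : Integrable (fun p : ℝ × ℝ => p.1 ^ 2) π)
    (h2 : Integrable (fun p : ℝ × ℝ => p.2 ^ 2) π) :
    Integrable (fun p : ℝ × ℝ => p.1 * p.2) π := by
  have hg : Integrable (fun p : ℝ × ℝ => (p.1 ^ 2 + p.2 ^ 2) / 2) π := (h1.add h2).div_const 2
  refine hg.mono' ((measurable_fst.mul measurable_snd).aestronglyMeasurable)
    (ae_of_all _ fun p => ?_)
  rw [Real.norm_eq_abs, abs_mul]
  nlinarith [sq_nonneg (|p.1| - |p.2|), sq_abs p.1, sq_abs p.2]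

lemma IsCoupling.integrable_psi_prod (hc : IsCoupling π μ ν)
    (hxy : Integrable (fun p : ℝ × ℝ => p.1 * p.2) π) :
    Integrable (fun z : (ℝ × ℝ) × ℝ × ℝ => psi z.1.1 z.2.1 * psi z.1.2 z.2.2)
      (π.prod (volume.prod volume)) := by
  haveI := hc.isProbabilityMeasure
  have hm : AEStronglyMeasurable
      (fun z : (ℝ × ℝ) × ℝ × ℝ => psi z.1.1 z.2.1 * psi z.1.2 z.2.2)
      (π.prod (volume.prod volume)) :=
    ((psi_measurable.comp ((measurable_fst.fst).prodMk (measurable_snd.fst))).mul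
      (psi_measurable.comp ((measurable_fst.snd).prodMk (measurable_snd.snd)))).aestronglyMeasurable
  rw [integrable_prod_iff hm]
  refine ⟨ae_of_all _ fun p => ?_, ?_⟩
  · exact (integrable_psi p.1).mul_prod (integrable_psi p.2)
  · have heq : (fun p : ℝ × ℝ =>
        ∫ q : ℝ × ℝ, ‖psi p.1 q.1 * psi p.2 q.2‖ ∂(volume.prod volume))
        = fun p : ℝ × ℝ => |p.1| * |p.2| := by
      funext p
      have habs : ∀ q : ℝ × ℝ, ‖psi p.1 q.1 * psi p.2 q.2‖ = |psi p.1 q.1| * |psi p.2 q.2| :=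
        fun q => by rw [Real.norm_eq_abs, abs_mul]
      rw [integral_congr_ae (ae_of_all _ habs),
        integral_prod_mul (f := fun s => |psi p.1 s|) (g := fun s => |psi p.2 s|),
        integral_abs_psi, integral_abs_psi]
    rw [heq]
    exact hxy.abs.congr (ae_of_all _ fun p => abs_mul _ _)

lemma IsCoupling.integral_mul_eq_swap (hc : IsCoupling π μ ν)
    (hxy : Integrable (fun p : ℝ × ℝ => p.1 * p.2) π) :
    ∫ p : ℝ × ℝ, p.1 * p.2 ∂π
      = ∫ q : ℝ × ℝ, (∫ p : ℝ × ℝ, psi p.1 q.1 * psi p.2 q.2 ∂π) ∂(volume.prod volume) := by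
  haveI := hc.isProbabilityMeasure
  have h1 : ∀ p : ℝ × ℝ, p.1 * p.2
      = ∫ q : ℝ × ℝ, psi p.1 q.1 * psi p.2 q.2 ∂(volume.prod volume) := by
    intro p
    rw [integral_prod_mul (f := psi p.1) (g := psi p.2), integral_psi, integral_psi]
  calc ∫ p : ℝ × ℝ, p.1 * p.2 ∂π
      = ∫ p : ℝ × ℝ, (∫ q : ℝ × ℝ, psi p.1 q.1 * psi p.2 q.2 ∂(volume.prod volume)) ∂π :=
        integral_congr_ae (ae_of_all _ h1)
    _ = _ := integral_integral_swap (hc.integrable_psi_prod hxy)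

lemma IsCoupling.integral_mul_le_mono (hc : IsCoupling π μ ν)
    (hxy : Integrable (fun p : ℝ × ℝ => p.1 * p.2) π)
    (hxym : Integrable (fun p : ℝ × ℝ => p.1 * p.2) (monoCoupling μ ν)) :
    ∫ p : ℝ × ℝ, p.1 * p.2 ∂π ≤ ∫ p : ℝ × ℝ, p.1 * p.2 ∂(monoCoupling μ ν) := by
  haveI := hc.isProbabilityMeasure
  haveI := (monoCoupling_isCoupling μ ν).isProbabilityMeasure
  rw [hc.integral_mul_eq_swap hxy, (monoCoupling_isCoupling μ ν).integral_mul_eq_swap hxym]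
  refine integral_mono ((hc.integrable_psi_prod hxy).integral_prod_right)
    (((monoCoupling_isCoupling μ ν).integrable_psi_prod hxym).integral_prod_right)
    (fun q => coupling_J_le hc q.1 q.2)

lemma IsCoupling.integral_cost (hc : IsCoupling π μ ν)
    (hμ' : Integrable (fun x : ℝ => x ^ 2) μ) (hν' : Integrable (fun x : ℝ => x ^ 2) ν) :
    ∫ p : ℝ × ℝ, (p.1 - p.2) ^ 2 ∂π
      = ∫ x, x ^ 2 ∂μ + ∫ y, y ^ 2 ∂ν - 2 * ∫ p : ℝ × ℝ, p.1 * p.2 ∂π := by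
  haveI := hc.isProbabilityMeasure
  have h1 := hc.integrable_fst_sq hμ'
  have h2 := hc.integrable_snd_sq hν'
  have hxy := hc.integrable_mul h1 h2
  have hpt : ∀ p : ℝ × ℝ, (p.1 - p.2) ^ 2 = p.1 ^ 2 + p.2 ^ 2 - 2 * (p.1 * p.2) :=
    fun p => by ring
  have hadd : Integrable (fun p : ℝ × ℝ => p.1 ^ 2 + p.2 ^ 2) π := h1.add h2
  have h2xy : Integrable (fun p : ℝ × ℝ => 2 * (p.1 * p.2)) π := hxy.const_mul 2
  rw [integral_congr_ae (ae_of_all _ hpt), integral_sub hadd h2xy, integral_add h1 h2,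
    integral_const_mul]
  have e1 : ∫ x, x ^ 2 ∂μ = ∫ p : ℝ × ℝ, p.1 ^ 2 ∂π := by
    rw [← hc.1]
    exact integral_map measurable_fst.aemeasurable
      ((measurable_id.pow_const 2).aestronglyMeasurable)
  have e2 : ∫ y, y ^ 2 ∂ν = ∫ p : ℝ × ℝ, p.2 ^ 2 ∂π := by
    rw [← hc.2]
    exact integral_map measurable_snd.aemeasurable
      ((measurable_id.pow_const 2).aestronglyMeasurable)
  rw [e1, e2]

end Integrability


end Aux

/-- The squared 2-Wasserstein distance between measures on `ℝ`. -/
noncomputable def W2sq (μ ν : Measure ℝ) : ℝ :=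
  sInf {r | ∃ π : Measure (ℝ × ℝ), IsCoupling π μ ν ∧ r = ∫ p, (p.1 - p.2) ^ 2 ∂π}

/-- The monotone (comonotone) coupling given by the pair of quantile functions is an
optimal coupling for the quadratic cost. -/
theorem monotone_coupling_optimal (μ ν : Measure ℝ)
    [IsProbabilityMeasure μ] [IsProbabilityMeasure ν]
    (hμ2 : Integrable (fun t => (quantile μ t) ^ 2) unif)
    (hν2 : Integrable (fun t => (quantile ν t) ^ 2) unif) :
    IsCoupling (unif.map fun t => (quantile μ t, quantile ν t)) μ ν ∧
      ∫ p, (p.1 - p.2) ^ 2 ∂(unif.map fun t => (quantile μ t, quantile ν t)) =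
        W2sq μ ν := by
  have hμ' := integrable_sq_of_quantile hμ2
  have hν' := integrable_sq_of_quantile hν2
  have hcm : IsCoupling (monoCoupling μ ν) μ ν := monoCoupling_isCoupling μ ν
  have hxym : Integrable (fun p : ℝ × ℝ => p.1 * p.2) (monoCoupling μ ν) :=
    hcm.integrable_mul (hcm.integrable_fst_sq hμ') (hcm.integrable_snd_sq hν')
  set S : Set ℝ :=
    {r | ∃ π : Measure (ℝ × ℝ), IsCoupling π μ ν ∧ r = ∫ p, (p.1 - p.2) ^ 2 ∂π} with hSdef
  have hlower : ∀ r ∈ S, (∫ p : ℝ × ℝ, (p.1 - p.2) ^ 2 ∂(monoCoupling μ ν)) ≤ r := by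
    rintro r ⟨π', hc, rfl⟩
    have hxy := hc.integrable_mul (hc.integrable_fst_sq hμ') (hc.integrable_snd_sq hν')
    rw [hc.integral_cost hμ' hν', hcm.integral_cost hμ' hν']
    have hle := hc.integral_mul_le_mono hxy hxym
    linarith
  have hmem : (∫ p : ℝ × ℝ, (p.1 - p.2) ^ 2 ∂(monoCoupling μ ν)) ∈ S := ⟨_, hcm, rfl⟩
  refine ⟨hcm, ?_⟩
  show (∫ p : ℝ × ℝ, (p.1 - p.2) ^ 2 ∂(monoCoupling μ ν)) = sInf S
  exact le_antisymm (le_csInf ⟨_, hmem⟩ hlower) (csInf_le ⟨_, hlower⟩ hmem)
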